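/- arXiv:1509.07728 — 3 statements merged into one kernel-verified Lean document; each statement's English description precedes it below -/
import Mathlib

section
/- Let β ≤ 1/(2(1+exp(R))). For any w₁, w₂ in the ball B_R = {w ∈ ℝ^d : ‖w‖₂ ≤ R}, any x ∈ ℝ^d with ‖x‖₂ ≤ 1, and any y ∈ {-1, +1}, the logistic loss f(w) = log(1+exp(-y·⟨x,w⟩)) satisfies f(w₂) ≥ f(w₁) + ⟨∇f(w₁), w₂ - w₁⟩ + (β/2)·(⟨x, w₂ - w₁⟩)². -/
open Real

/-!
Along the direction `x` the loss is the one-variable function `L t = log (1 + exp (-t))`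
evaluated at `t = y ⟪x, w⟫`, and `|t| ≤ ‖x‖ ‖w‖ ≤ R` on the ball. Its second derivative is
`exp (-t) / (1 + exp (-t)) ^ 2 = 1 / (exp t + 2 + exp (-t)) ≥ 1 / (2 (1 + exp R))` there,
so `L - β t² / 2` is convex on `[-R, R]` and the tangent-line inequality for it is the claim
(the factor `y² = 1` disappears from the quadratic term).
-/

lemma ConvexOn.add_deriv_mul_sub_le {S : Set ℝ} {f : ℝ → ℝ} {f' a b : ℝ}
    (hfc : ConvexOn ℝ S f) (ha : a ∈ S) (hb : b ∈ S) (hf : HasDerivAt f f' a) :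
    f a + f' * (b - a) ≤ f b := by
  rcases lt_trichotomy a b with hab | rfl | hba
  · have := hfc.le_slope_of_hasDerivAt ha hb hab hf
    rw [slope_def_field, le_div_iff₀ (sub_pos.2 hab)] at this
    linarith
  · simp
  · have := hfc.slope_le_of_hasDerivAt hb ha hba hf
    rw [slope_def_field, div_le_iff₀ (sub_pos.2 hba)] at this
    linarith

lemma add_deriv_mul_sub_add_sq_le_of_le_deriv2 {S : Set ℝ} (hS : Convex ℝ S)
    {f f' f'' : ℝ → ℝ} {m : ℝ}
    (hf : ∀ t ∈ S, HasDerivAt f (f' t) t) (hf' : ∀ t ∈ S, HasDerivAt f' (f'' t) t)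
    (hm : ∀ t ∈ S, m ≤ f'' t) {a b : ℝ} (ha : a ∈ S) (hb : b ∈ S) :
    f a + f' a * (b - a) + m / 2 * (b - a) ^ 2 ≤ f b := by
  have hg : ∀ t ∈ S, HasDerivAt (fun t => f t - m / 2 * t ^ 2) (f' t - m * t) t := fun t ht =>
    ((hf t ht).sub ((hasDerivAt_pow 2 t).const_mul (m / 2))).congr_deriv (by push_cast; ring)
  have hg' : ∀ t ∈ S, HasDerivAt (fun t => f' t - m * t) (f'' t - m) t := fun t ht =>
    ((hf' t ht).sub ((hasDerivAt_id' t).const_mul m)).congr_deriv (by ring)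
  have hconv : ConvexOn ℝ S (fun t => f t - m / 2 * t ^ 2) :=
    convexOn_of_hasDerivWithinAt2_nonneg hS
      (fun t ht => (hg t ht).continuousAt.continuousWithinAt)
      (fun t ht => (hg t (interior_subset ht)).hasDerivWithinAt)
      (fun t ht => (hg' t (interior_subset ht)).hasDerivWithinAt)
      (fun t ht => sub_nonneg.2 (hm t (interior_subset ht)))
  have := hconv.add_deriv_mul_sub_le ha hb (hg a ha)
  linarith

lemma hasDerivAt_log_one_add_exp_neg (t : ℝ) :
    HasDerivAt (fun t => log (1 + exp (-t))) (-(exp (-t) / (1 + exp (-t)))) t := by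
  have h : HasDerivAt (fun t => 1 + exp (-t)) (-exp (-t)) t := by
    simpa using ((hasDerivAt_id t).neg.exp).const_add 1
  simpa [neg_div] using h.log (by positivity)

lemma hasDerivAt_neg_exp_neg_div_one_add_exp_neg (t : ℝ) :
    HasDerivAt (fun t => -(exp (-t) / (1 + exp (-t)))) (exp (-t) / (1 + exp (-t)) ^ 2) t := by
  have hnum : HasDerivAt (fun t => exp (-t)) (-exp (-t)) t := by
    simpa using (hasDerivAt_id t).neg.exp
  exact (hnum.div (hnum.const_add 1) (by positivity)).neg.congr_deriv (by ring)

lemma one_div_two_mul_one_add_exp_le {R t : ℝ} (ht : |t| ≤ R) :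
    1 / (2 * (1 + exp R)) ≤ exp (-t) / (1 + exp (-t)) ^ 2 := by
  have hrw : exp (-t) / (1 + exp (-t)) ^ 2 = 1 / (exp t + 2 + exp (-t)) := by
    rw [exp_neg]
    field_simp
    ring
  have hpos : exp t ≤ exp R := exp_le_exp.2 ((le_abs_self t).trans ht)
  have hneg : exp (-t) ≤ exp R := exp_le_exp.2 ((neg_le_abs t).trans ht)
  rw [hrw]
  gcongr
  linarith

lemma log_one_add_exp_neg_tangent_add_sq_le {R β t₁ t₂ : ℝ} (hβ : β ≤ 1 / (2 * (1 + exp R)))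
    (h₁ : |t₁| ≤ R) (h₂ : |t₂| ≤ R) :
    log (1 + exp (-t₁)) + -(exp (-t₁) / (1 + exp (-t₁))) * (t₂ - t₁) + β / 2 * (t₂ - t₁) ^ 2
      ≤ log (1 + exp (-t₂)) :=
  add_deriv_mul_sub_add_sq_le_of_le_deriv2 (convex_Icc (-R) R)
    (fun t _ => hasDerivAt_log_one_add_exp_neg t)
    (fun t _ => hasDerivAt_neg_exp_neg_div_one_add_exp_neg t)
    (fun _ ht => hβ.trans (one_div_two_mul_one_add_exp_le (abs_le.2 ht)))
    (abs_le.1 h₁) (abs_le.1 h₂)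

lemma abs_mul_inner_le {E : Type*} [NormedAddCommGroup E] [InnerProductSpace ℝ E]
    {x w : E} {y R : ℝ} (hy : |y| = 1) (hx : ‖x‖ ≤ 1) (hw : ‖w‖ ≤ R) : |y * inner ℝ x w| ≤ R := by
  rw [abs_mul, hy, one_mul]
  calc |inner ℝ x w| ≤ ‖x‖ * ‖w‖ := abs_real_inner_le_norm x w
    _ ≤ 1 * R := mul_le_mul hx hw (norm_nonneg _) zero_le_one
    _ = R := one_mul R

theorem logistic_loss_exp_concave_general (R : ℝ) (d : ℕ)
    (x : EuclideanSpace ℝ (Fin d)) (hx : ‖x‖ ≤ 1)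
    (y : ℝ) (hy : y = -1 ∨ y = 1)
    (β : ℝ) (hβ : β ≤ 1 / (2 * (1 + exp R)))
    (w₁ w₂ : EuclideanSpace ℝ (Fin d)) (hw₁ : ‖w₁‖ ≤ R) (hw₂ : ‖w₂‖ ≤ R) :
    log (1 + exp (-(y * inner ℝ x w₂))) ≥
      log (1 + exp (-(y * inner ℝ x w₁)))
      + inner ℝ ((-(y * (exp (-(y * inner ℝ x w₁)) / (1 + exp (-(y * inner ℝ x w₁)))))) • x)
          (w₂ - w₁)
      + (β / 2) * (inner ℝ x (w₂ - w₁) : ℝ) ^ 2 := by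
  have hy_abs : |y| = 1 := by rcases hy with rfl | rfl <;> norm_num
  have hy_sq : y ^ 2 = 1 := by rw [← sq_abs, hy_abs, one_pow]
  have key := log_one_add_exp_neg_tangent_add_sq_le hβ
    (abs_mul_inner_le hy_abs hx hw₁) (abs_mul_inner_le hy_abs hx hw₂)
  rw [real_inner_smul_left, inner_sub_right]
  have hsq : (y * inner ℝ x w₂ - y * inner ℝ x w₁) ^ 2 = (inner ℝ x w₂ - inner ℝ x w₁) ^ 2 := by
    rw [← mul_sub, mul_pow, hy_sq, one_mul]
  rw [hsq] at key
  linarith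

/-- Strong-convexity-type lower bound for the logistic loss
f(w) = log(1+exp(-y⟨x,w⟩)) on the ball of radius R:
f(w₂) ≥ f(w₁) + ⟨∇f(w₁), w₂-w₁⟩ + (β/2)⟨x, w₂-w₁⟩², with
∇f(w₁) = -y·(exp(-y⟨x,w₁⟩)/(1+exp(-y⟨x,w₁⟩)))·x. -/
theorem logistic_loss_exp_concave (R : ℝ) (hR : 0 < R) (d : ℕ) (hd : 1 ≤ d)
    (x : EuclideanSpace ℝ (Fin d)) (hx : ‖x‖ ≤ 1)
    (y : ℝ) (hy : y = -1 ∨ y = 1)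
    (β : ℝ) (hβ : β ≤ 1 / (2 * (1 + exp R)))
    (w₁ w₂ : EuclideanSpace ℝ (Fin d)) (hw₁ : ‖w₁‖ ≤ R) (hw₂ : ‖w₂‖ ≤ R) :
    log (1 + exp (-(y * inner ℝ x w₂))) ≥
      log (1 + exp (-(y * inner ℝ x w₁)))
      + inner ℝ ((-(y * (exp (-(y * inner ℝ x w₁)) / (1 + exp (-(y * inner ℝ x w₁)))))) • x)
          (w₂ - w₁)
      + (β / 2) * (inner ℝ x (w₂ - w₁) : ℝ) ^ 2 :=
  logistic_loss_exp_concave_general R d x hx y hy β hβ w₁ w₂ hw₁ hw₂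
end

section
/- Let Z₁ = λI, Z_{t+1} = Z_t + c·x_t x_tᵀ with λ, c > 0 and ‖x_t‖₂ ≤ 1. Then Σ_{t=1}^T min(c·‖x_t‖²_{Z_t⁻¹}, 1) ≤ 2·log(det(Z_{T+1})/det(Z₁)). -/
open Real Matrix Finset

/-! By the matrix determinant lemma each update multiplies the determinant by `1 + u_t`, where
`u_t = c‖x_t‖²_{Z_t⁻¹} ≥ 0`, so `log (det Z_{T+1} / det Z₁) = ∑ log (1 + u_t)`; the claim then
follows termwise from `min u 1 ≤ 2 log (1 + u)`. -/

theorem min_le_two_mul_log_one_add {u : ℝ} (hu : 0 ≤ u) : min u 1 ≤ 2 * log (1 + u) := by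
  rcases le_or_gt u 1 with hu1 | hu1
  · rw [min_eq_left hu1]
    -- `log (1 + u) ≥ 1 - 1/(1 + u) = u/(1 + u) ≥ u/2` on `[0, 1]`
    have hlog : 1 - (1 + u)⁻¹ ≤ log (1 + u) := by
      have := log_le_sub_one_of_pos (inv_pos.mpr (by linarith : (0 : ℝ) < 1 + u))
      rw [log_inv] at this
      linarith
    have hinv : (1 + u)⁻¹ ≤ 1 - u / 2 := by
      rw [inv_le_iff_one_le_mul₀ (by linarith)]
      nlinarith
    linarith
  · rw [min_eq_right hu1.le]
    have := log_le_log (by norm_num) (by linarith : (2 : ℝ) ≤ 1 + u)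
    linarith [log_two_gt_d9]

namespace Matrix

variable {n R : Type*} [Fintype n] [DecidableEq n] [CommRing R]

theorem det_add_vecMulVec {A : Matrix n n R} (hA : IsUnit A.det)
    (u v : n → R) : (A + vecMulVec u v).det = A.det * (1 + v ⬝ᵥ A⁻¹ *ᵥ u) := by
  rw [vecMulVec_eq Unit, det_add_replicateCol_mul_replicateRow hA, det_unique (n := Unit),
    Matrix.mul_assoc, ← replicateCol_mulVec, add_apply, one_apply_eq,
    replicateRow_mul_replicateCol_apply]

theorem det_add_smul_vecMulVec_self {A : Matrix n n R} (hA : IsUnit A.det)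
    (c : R) (x : n → R) : (A + c • vecMulVec x x).det = A.det * (1 + c * (x ⬝ᵥ A⁻¹ *ᵥ x)) := by
  rw [← smul_vecMulVec, det_add_vecMulVec hA, mulVec_smul, dotProduct_smul, smul_eq_mul]

omit [DecidableEq n] in
theorem posSemidef_smul_vecMulVec_self {c : ℝ} (hc : 0 ≤ c) (x : n → ℝ) :
    (c • vecMulVec x x).PosSemidef :=
  (posSemidef_vecMulVec_self_star x).smul hc

end Matrix

section RankOneUpdates

variable {n : Type*} [Fintype n] {c : ℝ} {x : ℕ → n → ℝ} {Z : ℕ → Matrix n n ℝ}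

theorem posDef_of_rankOneUpdates (hZ1 : (Z 1).PosDef) (hc : 0 ≤ c)
    (hZrec : ∀ t ≥ 1, Z (t + 1) = Z t + c • vecMulVec (x t) (x t)) : ∀ t ≥ 1, (Z t).PosDef := by
  refine Nat.le_induction hZ1 fun t ht hZt => ?_
  rw [hZrec t ht]
  exact hZt.add_posSemidef (posSemidef_smul_vecMulVec_self hc (x t))

theorem det_eq_mul_prod_of_rankOneUpdates [DecidableEq n] (hZ : ∀ t ≥ 1, IsUnit (Z t).det)
    (hZrec : ∀ t ≥ 1, Z (t + 1) = Z t + c • vecMulVec (x t) (x t)) (T : ℕ) :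
    (Z (T + 1)).det = (Z 1).det * ∏ t ∈ Icc 1 T, (1 + c * (x t ⬝ᵥ (Z t)⁻¹ *ᵥ x t)) := by
  induction T with
  | zero => simp
  | succ T ih =>
    rw [prod_Icc_succ_top (by omega), ← mul_assoc, ← ih, hZrec (T + 1) (by omega),
      det_add_smul_vecMulVec_self (hZ (T + 1) (by omega))]

end RankOneUpdates

theorem sum_min_le_log_det_general (d : ℕ) (lam c : ℝ) (hlam : 0 < lam) (hc : 0 < c)
    (x : ℕ → Fin d → ℝ)
    (Z : ℕ → Matrix (Fin d) (Fin d) ℝ)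
    (hZ1 : Z 1 = lam • (1 : Matrix (Fin d) (Fin d) ℝ))
    (hZrec : ∀ t ≥ 1, Z (t + 1) = Z t + c • vecMulVec (x t) (x t)) (T : ℕ) :
    ∑ t ∈ Finset.Icc 1 T, min (c * (x t ⬝ᵥ (Z t)⁻¹.mulVec (x t))) 1
      ≤ 2 * log ((Z (T + 1)).det / (Z 1).det) := by
  have hpd : ∀ t ≥ 1, (Z t).PosDef := by
    refine posDef_of_rankOneUpdates ?_ hc.le hZrec
    rw [hZ1]
    exact PosDef.one.smul hlam
  have hu : ∀ t ∈ Icc 1 T, 0 ≤ c * (x t ⬝ᵥ (Z t)⁻¹ *ᵥ x t) := fun t ht => mul_nonneg hc.le <| by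
    simpa using (hpd t (mem_Icc.mp ht).1).inv.posSemidef.dotProduct_mulVec_nonneg (x t)
  calc ∑ t ∈ Icc 1 T, min (c * (x t ⬝ᵥ (Z t)⁻¹ *ᵥ x t)) 1
      ≤ ∑ t ∈ Icc 1 T, 2 * log (1 + c * (x t ⬝ᵥ (Z t)⁻¹ *ᵥ x t)) :=
        sum_le_sum fun t ht => min_le_two_mul_log_one_add (hu t ht)
    _ = 2 * log (∏ t ∈ Icc 1 T, (1 + c * (x t ⬝ᵥ (Z t)⁻¹ *ᵥ x t))) := by
        rw [log_prod fun t ht => by linarith [hu t ht], mul_sum]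
    _ = 2 * log ((Z (T + 1)).det / (Z 1).det) := by
        rw [det_eq_mul_prod_of_rankOneUpdates (fun t ht => (hpd t ht).det_pos.ne'.isUnit) hZrec,
          mul_div_cancel_left₀ _ (hpd 1 le_rfl).det_pos.ne']

/-- With Z₁ = λI and Z_{t+1} = Z_t + c·x_t x_tᵀ, ‖x_t‖ ≤ 1,
Σ_{t=1}^T min(c‖x_t‖²_{Z_t⁻¹}, 1) ≤ 2·log(det Z_{T+1}/det Z₁). -/
theorem sum_min_le_log_det (d : ℕ) (lam c : ℝ) (hlam : 0 < lam) (hc : 0 < c)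
    (x : ℕ → Fin d → ℝ) (hx : ∀ t, ‖(EuclideanSpace.equiv (Fin d) ℝ).symm (x t)‖ ≤ 1)
    (Z : ℕ → Matrix (Fin d) (Fin d) ℝ)
    (hZ1 : Z 1 = lam • (1 : Matrix (Fin d) (Fin d) ℝ))
    (hZrec : ∀ t ≥ 1, Z (t + 1) = Z t + c • vecMulVec (x t) (x t)) (T : ℕ) :
    ∑ t ∈ Finset.Icc 1 T, min (c * (x t ⬝ᵥ (Z t)⁻¹.mulVec (x t))) 1
      ≤ 2 * log ((Z (T + 1)).det / (Z 1).det) :=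
  sum_min_le_log_det_general d lam c hlam hc x Z hZ1 hZrec T
end

section
/- Let X₁,…,X_n be a martingale difference sequence with |X_i| ≤ K and conditional variance sum Σ_n² = Σ_{t=1}^n E[X_t²|F_{t-1}]. Then for all ν, t > 0: P[max_{i≤n} S_i > √(2νt) + (2/3)Kt and Σ_n² ≤ ν] ≤ e^{-t}, where S_i = Σ_{j≤i} X_j. -/
/-
For `0 ≤ λ` with `λ K < 3`, comparing the exponential series termwise with a geometric one
(`(k + 2)! ≥ 2 · 3 ^ k`) gives `exp (λ x) ≤ 1 + λ x + ψ(λ) x²` for `|x| ≤ K`, where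
`ψ(λ) = λ² / (2 (1 - λ K / 3))` (`bernsteinCoeff`). Taking conditional expectations,
`E[exp (λ X_i) | F_{i-1}] ≤ exp (ψ(λ) E[X_i² | F_{i-1}])`, so `M_i = exp (λ S_i - ψ(λ) Σ_i²)` is a
nonnegative supermartingale with `M_0 = 1`. On the event, `M` evaluated at the first time `S`
exceeds `√(2νt) + 2Kt/3` is at least `exp (λ (√(2νt) + 2Kt/3) - ψ(λ) ν)`, which is `≥ e^t` for
`λ = √(2νt) / (ν + K √(2νt) / 3)`; optional stopping and Markov's inequality finish the proof.
-/

open MeasureTheory Finset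
open scoped Nat

theorem Real.exp_le_one_add_add_sq_div {y : ℝ} (hy : |y| < 3) :
    Real.exp y ≤ 1 + y + y ^ 2 / (2 * (1 - |y| / 3)) := by
  have hr0 : 0 ≤ |y| / 3 := by positivity
  have hr1 : |y| / 3 < 1 := by linarith
  have hsum : Summable fun k : ℕ => y ^ (k + 2) / (k + 2)! :=
    (summable_nat_add_iff 2).2 (Real.summable_pow_div_factorial y)
  have hgeom : Summable fun k : ℕ => y ^ 2 / 2 * (|y| / 3) ^ k :=
    (summable_geometric_of_lt_one hr0 hr1).mul_left _
  have hterm (k : ℕ) : y ^ (k + 2) / (k + 2)! ≤ y ^ 2 / 2 * (|y| / 3) ^ k := by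
    have hfac : (2 * 3 ^ k : ℝ) ≤ (k + 2)! := by
      exact_mod_cast (Nat.factorial_mul_pow_le_factorial (m := 2) (n := k)).trans_eq
        (by rw [add_comm])
    calc y ^ (k + 2) / (k + 2)! ≤ |y| ^ (k + 2) / (k + 2)! :=
          div_le_div_of_nonneg_right ((le_abs_self _).trans (abs_pow y _).le) (by positivity)
      _ ≤ |y| ^ (k + 2) / (2 * 3 ^ k) := by gcongr
      _ = y ^ 2 / 2 * (|y| / 3) ^ k := by
          rw [pow_add, div_pow, ← sq_abs y]; field_simp
  calc Real.exp y = (1 + y) + ∑' k : ℕ, y ^ (k + 2) / (k + 2)! := by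
        rw [Real.exp_eq_exp_ℝ, NormedSpace.exp_eq_tsum_div]
        beta_reduce
        rw [← (Real.summable_pow_div_factorial y).sum_add_tsum_nat_add 2]
        norm_num [Finset.sum_range_succ]
    _ ≤ (1 + y) + ∑' k : ℕ, y ^ 2 / 2 * (|y| / 3) ^ k :=
        add_le_add_right (hsum.tsum_le_tsum hterm hgeom) _
    _ = 1 + y + y ^ 2 / (2 * (1 - |y| / 3)) := by
        rw [tsum_mul_left, tsum_geometric_of_lt_one hr0 hr1]; field_simp

noncomputable def bernsteinCoeff (l K : ℝ) : ℝ := l ^ 2 / (2 * (1 - l * K / 3))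

theorem bernsteinCoeff_nonneg {l K : ℝ} (hlK : l * K ≤ 3) : 0 ≤ bernsteinCoeff l K :=
  div_nonneg (sq_nonneg l) (by linarith)

theorem Real.exp_mul_le_one_add_add_bernsteinCoeff_mul_sq {l K x : ℝ} (hl : 0 ≤ l)
    (hlK : l * K < 3) (hx : |x| ≤ K) :
    Real.exp (l * x) ≤ 1 + l * x + bernsteinCoeff l K * x ^ 2 := by
  have hlx : |l * x| ≤ l * K := by rw [abs_mul, abs_of_nonneg hl]; gcongr
  calc Real.exp (l * x) ≤ 1 + l * x + (l * x) ^ 2 / (2 * (1 - |l * x| / 3)) :=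
        Real.exp_le_one_add_add_sq_div (hlx.trans_lt hlK)
    _ ≤ 1 + l * x + (l * x) ^ 2 / (2 * (1 - l * K / 3)) := by
        have : 0 < 1 - l * K / 3 := by linarith
        gcongr
    _ = 1 + l * x + bernsteinCoeff l K * x ^ 2 := by
        rw [bernsteinCoeff, mul_pow, mul_div_right_comm]

theorem exists_le_mul_sub_bernsteinCoeff_mul {K ν t : ℝ} (hK : 0 ≤ K) (hν : 0 < ν) (ht : 0 < t) :
    ∃ l, 0 ≤ l ∧ l * K < 3 ∧
      t ≤ l * (Real.sqrt (2 * ν * t) + 2 / 3 * K * t) - bernsteinCoeff l K * ν := by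
  set s := Real.sqrt (2 * ν * t)
  have hs : 0 < s := Real.sqrt_pos.2 (by positivity)
  have hs2 : s ^ 2 = 2 * ν * t := Real.sq_sqrt (by positivity)
  have hD : 0 < ν + s * K / 3 := by positivity
  -- `l = s / (ν + s K / 3)` gives `l (s + 2 K t / 3) = 2 t` and `bernsteinCoeff l K * ν ≤ t`
  refine ⟨s / (ν + s * K / 3), by positivity, ?_, ?_⟩
  · rw [div_mul_eq_mul_div, div_lt_iff₀ hD]; nlinarith
  · have hlx : s / (ν + s * K / 3) * (s + 2 / 3 * K * t) = 2 * t := by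
      rw [div_mul_eq_mul_div, div_eq_iff hD.ne']; linear_combination hs2
    have hcν : bernsteinCoeff (s / (ν + s * K / 3)) K * ν ≤ t := by
      have h1 : 1 - s / (ν + s * K / 3) * K / 3 = ν / (ν + s * K / 3) := by field_simp; ring
      have h2 : bernsteinCoeff (s / (ν + s * K / 3)) K * ν = ν * t / (ν + s * K / 3) := by
        rw [bernsteinCoeff, h1, div_pow, hs2]; field_simp
      rw [h2, div_le_iff₀ hD]
      nlinarith [mul_nonneg (mul_nonneg hs.le hK) ht.le]
    linarith

theorem MeasureTheory.integrable_exp_mul_of_abs_le {Ω : Type*} {m0 : MeasurableSpace Ω}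
    {μ : Measure Ω} [IsFiniteMeasure μ] {Y : Ω → ℝ} {K : ℝ} (hY : AEStronglyMeasurable Y μ)
    (hbdd : ∀ᵐ ω ∂μ, |Y ω| ≤ K) (l : ℝ) : Integrable (fun ω => Real.exp (l * Y ω)) μ := by
  refine .of_bound (Real.continuous_exp.comp_aestronglyMeasurable (hY.const_mul l))
    (Real.exp (|l| * K)) ?_
  filter_upwards [hbdd] with ω hω
  rw [Real.norm_eq_abs, abs_of_pos (Real.exp_pos _)]
  refine Real.exp_le_exp.2 ?_
  calc l * Y ω ≤ |l * Y ω| := le_abs_self _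
    _ = |l| * |Y ω| := abs_mul _ _
    _ ≤ |l| * K := by gcongr

theorem condExp_exp_mul_le_exp_bernsteinCoeff_mul {Ω : Type*} {m m0 : MeasurableSpace Ω}
    {μ : Measure Ω} [IsFiniteMeasure μ] (hm : m ≤ m0) {Y : Ω → ℝ} {K l : ℝ}
    (hY : AEStronglyMeasurable Y μ) (hbdd : ∀ᵐ ω ∂μ, |Y ω| ≤ K) (hmean : μ[Y | m] =ᵐ[μ] 0)
    (hl : 0 ≤ l) (hlK : l * K < 3) :
    μ[fun ω => Real.exp (l * Y ω) | m] ≤ᵐ[μ]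
      fun ω => Real.exp (bernsteinCoeff l K * μ[fun ω => Y ω ^ 2 | m] ω) := by
  set c := bernsteinCoeff l K
  have hYint : Integrable Y μ := .of_bound hY K (by simpa [Real.norm_eq_abs] using hbdd)
  have hY2int : Integrable (fun ω => Y ω ^ 2) μ := by
    refine .of_bound (hY.pow 2) (K ^ 2) ?_
    filter_upwards [hbdd] with ω hω
    simpa [Real.norm_eq_abs] using pow_le_pow_left₀ (abs_nonneg _) hω 2
  have hquad : (fun ω => 1 + l * Y ω + c * Y ω ^ 2) =
      (fun _ => 1) + (l • Y + c • fun ω => Y ω ^ 2) := by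
    ext ω; simp [add_assoc]
  have hquadint : Integrable (fun ω => 1 + l * Y ω + c * Y ω ^ 2) μ := by
    rw [hquad]; exact (integrable_const 1).add ((hYint.smul l).add (hY2int.smul c))
  have hcondquad : μ[fun ω => 1 + l * Y ω + c * Y ω ^ 2 | m] =ᵐ[μ]
      fun ω => 1 + c * μ[fun ω => Y ω ^ 2 | m] ω := by
    rw [hquad]
    filter_upwards [condExp_add (integrable_const 1) ((hYint.smul l).add (hY2int.smul c)) m,
      condExp_add (hYint.smul l) (hY2int.smul c) m, condExp_smul l Y m,
      condExp_smul c (fun ω => Y ω ^ 2) m, hmean] with ω h1 h2 h3 h4 h5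
    simp [h1, h2, h3, h4, h5, condExp_const hm]
  calc μ[fun ω => Real.exp (l * Y ω) | m]
      ≤ᵐ[μ] μ[fun ω => 1 + l * Y ω + c * Y ω ^ 2 | m] := by
        refine condExp_mono (integrable_exp_mul_of_abs_le hY hbdd l) hquadint ?_
        filter_upwards [hbdd] with ω hω
        exact Real.exp_mul_le_one_add_add_bernsteinCoeff_mul_sq hl hlK hω
    _ =ᵐ[μ] fun ω => 1 + c * μ[fun ω => Y ω ^ 2 | m] ω := hcondquad
    _ ≤ᵐ[μ] fun ω => Real.exp (c * μ[fun ω => Y ω ^ 2 | m] ω) :=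
        .of_forall fun ω => by linarith [Real.add_one_le_exp (c * μ[fun ω => Y ω ^ 2 | m] ω)]

section StoppedSum

variable {Ω : Type*} (Y : ℕ → Ω → ℝ) (n : ℕ)

-- `S_{min i n}`: the partial sums frozen after time `n`, so that they form a process on all of `ℕ`
def stoppedSum (i : ℕ) (ω : Ω) : ℝ := ∑ j ∈ Icc 1 (min i n), Y j ω

variable {Y n}

@[simp]
theorem stoppedSum_zero : stoppedSum Y n 0 = 0 := by
  ext; simp [stoppedSum]

theorem stoppedSum_of_le {i : ℕ} (h : i ≤ n) (ω : Ω) :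
    stoppedSum Y n i ω = ∑ j ∈ Icc 1 i, Y j ω := by
  rw [stoppedSum, min_eq_left h]

theorem stoppedSum_succ_of_lt {i : ℕ} (h : i < n) :
    stoppedSum Y n (i + 1) = stoppedSum Y n i + Y (i + 1) := by
  ext ω
  rw [Pi.add_apply, stoppedSum_of_le h, stoppedSum_of_le h.le, sum_Icc_succ_top (by omega)]

theorem stoppedSum_succ_of_le {i : ℕ} (h : n ≤ i) : stoppedSum Y n (i + 1) = stoppedSum Y n i := by
  ext ω; rw [stoppedSum, stoppedSum, min_eq_right h, min_eq_right (by omega)]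

theorem stoppedSum_le_sum {ω : Ω} (hY : ∀ j ∈ Icc 1 n, 0 ≤ Y j ω) (i : ℕ) :
    stoppedSum Y n i ω ≤ ∑ j ∈ Icc 1 n, Y j ω :=
  sum_le_sum_of_subset_of_nonneg (Icc_subset_Icc_right (min_le_right i n)) fun j hj _ => hY j hj

theorem stoppedSum_nonneg {ω : Ω} (hY : ∀ j ∈ Icc 1 n, 0 ≤ Y j ω) (i : ℕ) :
    0 ≤ stoppedSum Y n i ω :=
  sum_nonneg fun j hj => hY j (Icc_subset_Icc_right (min_le_right i n) hj)

theorem abs_stoppedSum_le {ω : Ω} {K : ℝ} (hY : ∀ j ∈ Icc 1 n, |Y j ω| ≤ K) (i : ℕ) :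
    |stoppedSum Y n i ω| ≤ n * K :=
  calc |stoppedSum Y n i ω| ≤ stoppedSum (fun j ω => |Y j ω|) n i ω := abs_sum_le_sum_abs _ _
    _ ≤ ∑ j ∈ Icc 1 n, |Y j ω| :=
        stoppedSum_le_sum (Y := fun j ω => |Y j ω|) (fun j _ => abs_nonneg _) i
    _ ≤ ∑ _j ∈ Icc 1 n, K := sum_le_sum hY
    _ = n * K := by simp

theorem stronglyMeasurable_stoppedSum {m : MeasurableSpace Ω} {i : ℕ}
    (hY : ∀ j ∈ Icc 1 (min i n), StronglyMeasurable[m] (Y j)) :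
    StronglyMeasurable[m] (stoppedSum Y n i) :=
  Finset.stronglyMeasurable_fun_sum _ hY

end StoppedSum

theorem MeasureTheory.Supermartingale.measure_exists_ge_le {Ω : Type*} {m0 : MeasurableSpace Ω}
    {μ : Measure Ω} [IsFiniteMeasure μ] {ℱ : Filtration ℕ m0} {M : ℕ → Ω → ℝ}
    (hM : Supermartingale M ℱ μ) (hnonneg : ∀ i, 0 ≤ᵐ[μ] M i) {ε : ℝ} (hε : 0 < ε) (n : ℕ) :
    μ {ω | ∃ i ≤ n, ε ≤ M i ω} ≤ ENNReal.ofReal ((∫ ω, M 0 ω ∂μ) / ε) := by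
  set τ : Ω → ℕ∞ := fun ω => (hittingBtwn M (Set.Ici ε) 0 n ω : ℕ)
  have hτ : IsStoppingTime ℱ τ :=
    hM.stronglyAdapted.adapted.isStoppingTime_hittingBtwn measurableSet_Ici
  have hτn (ω : Ω) : τ ω ≤ n := WithTop.coe_le_coe.2 (hittingBtwn_le ω)
  have hint : Integrable (stoppedValue M τ) μ := integrable_stoppedValue ℕ hτ hM.integrable hτn
  have hoptional : ∫ ω, stoppedValue M τ ω ∂μ ≤ ∫ ω, M 0 ω ∂μ := by
    have := hM.neg.expected_stoppedValue_mono (isStoppingTime_const ℱ 0) hτ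
      (fun _ => bot_le) hτn
    simpa [stoppedValue, integral_neg] using this
  have hsubset : {ω | ∃ i ≤ n, ε ≤ M i ω} ⊆ {ω | ε ≤ stoppedValue M τ ω} := by
    rintro ω ⟨i, hin, hi⟩
    exact stoppedValue_hittingBtwn_mem ⟨i, ⟨Nat.zero_le _, hin⟩, hi⟩
  have hmarkov := mul_meas_ge_le_integral_of_nonneg
    (by filter_upwards [ae_all_iff.2 hnonneg] with ω hω using hω _) hint ε
  calc μ {ω | ∃ i ≤ n, ε ≤ M i ω} ≤ μ {ω | ε ≤ stoppedValue M τ ω} := measure_mono hsubset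
    _ = ENNReal.ofReal (μ {ω | ε ≤ stoppedValue M τ ω}).toReal :=
        (ENNReal.ofReal_toReal (measure_ne_top _ _)).symm
    _ ≤ ENNReal.ofReal ((∫ ω, M 0 ω ∂μ) / ε) := by
        gcongr
        rw [le_div_iff₀' hε]
        exact hmarkov.trans hoptional

theorem MeasureTheory.supermartingale_exp_sub {Ω : Type*} {m0 : MeasurableSpace Ω}
    {μ : Measure Ω} [IsFiniteMeasure μ] {ℱ : Filtration ℕ m0} {S A : ℕ → Ω → ℝ}
    (hS : StronglyAdapted ℱ S) (hA : StronglyAdapted ℱ A)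
    (hA_pred : ∀ i, StronglyMeasurable[ℱ i] (A (i + 1)))
    (hint : ∀ i, Integrable (fun ω => Real.exp (S i ω - A i ω)) μ)
    (hinc_int : ∀ i, Integrable (fun ω => Real.exp (S (i + 1) ω - S i ω)) μ)
    (hinc : ∀ i, μ[fun ω => Real.exp (S (i + 1) ω - S i ω) | ℱ i] ≤ᵐ[μ]
      fun ω => Real.exp (A (i + 1) ω - A i ω)) :
    Supermartingale (fun i ω => Real.exp (S i ω - A i ω)) ℱ μ := by
  refine supermartingale_nat
    (fun i => Real.continuous_exp.comp_stronglyMeasurable ((hS i).sub (hA i))) hint fun i => ?_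
  -- `A` is predictable, so `exp (S i - A (i + 1))` can be pulled out of `μ[· | ℱ i]`
  set G : Ω → ℝ := fun ω => Real.exp (S i ω - A (i + 1) ω)
  have hG : StronglyMeasurable[ℱ i] G :=
    Real.continuous_exp.comp_stronglyMeasurable ((hS i).sub (hA_pred i))
  have hsplit : (fun ω => Real.exp (S (i + 1) ω - A (i + 1) ω)) =
      G * fun ω => Real.exp (S (i + 1) ω - S i ω) := by
    ext ω; simp only [G, Pi.mul_apply, ← Real.exp_add]; ring_nf
  rw [hsplit]
  filter_upwards [condExp_mul_of_stronglyMeasurable_left hG (hsplit ▸ hint (i + 1)) (hinc_int i),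
    hinc i] with ω hpull hω
  rw [hpull, Pi.mul_apply]
  calc G ω * μ[fun ω => Real.exp (S (i + 1) ω - S i ω) | ℱ i] ω
      ≤ G ω * Real.exp (A (i + 1) ω - A i ω) := by gcongr
    _ = Real.exp (S i ω - A i ω) := by simp only [G, ← Real.exp_add]; ring_nf

theorem supermartingale_exp_bernstein {Ω : Type*} {m0 : MeasurableSpace Ω} {μ : Measure Ω}
    [IsFiniteMeasure μ] {ℱ : Filtration ℕ m0} {n : ℕ} {X : ℕ → Ω → ℝ} {K l : ℝ}
    (hadapted : StronglyAdapted ℱ X) (hmds : ∀ i ∈ Icc 1 n, μ[X i | ℱ (i - 1)] =ᵐ[μ] 0)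
    (hbdd : ∀ i ∈ Icc 1 n, ∀ᵐ ω ∂μ, |X i ω| ≤ K) (hl : 0 ≤ l) (hlK : l * K < 3) :
    Supermartingale (fun i ω => Real.exp (l * stoppedSum X n i ω -
      bernsteinCoeff l K * stoppedSum (fun j => μ[fun ω => X j ω ^ 2 | ℱ (j - 1)]) n i ω)) ℱ μ := by
  set V : ℕ → Ω → ℝ := fun j => μ[fun ω => X j ω ^ 2 | ℱ (j - 1)]
  set c := bernsteinCoeff l K
  have hV_nonneg : ∀ᵐ ω ∂μ, ∀ j, 0 ≤ V j ω :=
    ae_all_iff.2 fun j => condExp_nonneg (.of_forall fun ω => sq_nonneg (X j ω))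
  have hS : StronglyAdapted ℱ (stoppedSum X n) := fun i =>
    stronglyMeasurable_stoppedSum fun j hj => (hadapted j).mono (ℱ.mono (by simp at hj; omega))
  have hV_meas (i j : ℕ) (hj : j ≤ i + 1) : StronglyMeasurable[ℱ i] (V j) :=
    stronglyMeasurable_condExp.mono (ℱ.mono (by omega))
  have hA : StronglyAdapted ℱ (stoppedSum V n) := fun i =>
    stronglyMeasurable_stoppedSum fun j hj => hV_meas i j (by simp at hj; omega)
  have hA_pred (i : ℕ) : StronglyMeasurable[ℱ i] (stoppedSum V n (i + 1)) :=
    stronglyMeasurable_stoppedSum fun j hj => hV_meas i j (by simp at hj; omega)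
  have hint (i : ℕ) :
      Integrable (fun ω => Real.exp (l * stoppedSum X n i ω - c * stoppedSum V n i ω)) μ := by
    refine .of_bound ((Real.continuous_exp.comp_stronglyMeasurable
      (((hS i).const_mul l).sub ((hA i).const_mul c))).mono (ℱ.le i)).aestronglyMeasurable
      (Real.exp (l * (n * K))) ?_
    filter_upwards [(Filter.eventually_all_finset _).2 hbdd, hV_nonneg] with ω hX hV
    rw [Real.norm_eq_abs, abs_of_pos (Real.exp_pos _)]
    have hc : 0 ≤ c := bernsteinCoeff_nonneg hlK.le
    have hSle := (le_abs_self _).trans (abs_stoppedSum_le hX i)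
    have hVnonneg := stoppedSum_nonneg (Y := V) (n := n) (fun j _ => hV j) i
    refine Real.exp_le_exp.2 ?_
    nlinarith
  have hstep (i : ℕ) :
      Integrable (fun ω => Real.exp (l * stoppedSum X n (i + 1) ω - l * stoppedSum X n i ω)) μ ∧
      μ[fun ω => Real.exp (l * stoppedSum X n (i + 1) ω - l * stoppedSum X n i ω) | ℱ i] ≤ᵐ[μ]
        fun ω => Real.exp (c * stoppedSum V n (i + 1) ω - c * stoppedSum V n i ω) := by
    rcases lt_or_ge i n with hin | hni
    · have hi : i + 1 ∈ Icc 1 n := mem_Icc.2 ⟨by omega, hin⟩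
      simp only [stoppedSum_succ_of_lt hin, Pi.add_apply, mul_add, add_sub_cancel_left]
      have hX : AEStronglyMeasurable (X (i + 1)) μ :=
        ((hadapted (i + 1)).mono (ℱ.le _)).aestronglyMeasurable
      exact ⟨integrable_exp_mul_of_abs_le hX (hbdd _ hi) l,
        condExp_exp_mul_le_exp_bernsteinCoeff_mul (ℱ.le i) hX (hbdd _ hi) (hmds _ hi) hl hlK⟩
    · simp only [stoppedSum_succ_of_le hni, sub_self, Real.exp_zero]
      exact ⟨integrable_const 1, (Filter.EventuallyEq.of_eq (condExp_const (ℱ.le i) (1 : ℝ))).le⟩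
  exact supermartingale_exp_sub (S := fun i ω => l * stoppedSum X n i ω)
    (A := fun i ω => c * stoppedSum V n i ω) (fun i => (hS i).const_mul l)
    (fun i => (hA i).const_mul c) (fun i => (hA_pred i).const_mul c) hint
    (fun i => (hstep i).1) (fun i => (hstep i).2)

/-- Bernstein's (Freedman's) inequality for martingales: if (X_i) is a
martingale difference sequence with |X_i| ≤ K, S_i = Σ_{j≤i} X_j and
Σ_n² = Σ_{i=1}^n E[X_i²|F_{i-1}], then for all ν, t > 0,
P[max_{i≤n} S_i > √(2νt) + (2/3)Kt and Σ_n² ≤ ν] ≤ e^{-t}. -/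
theorem bernstein_inequality_for_martingales
    {Ω : Type*} {m0 : MeasurableSpace Ω} (μ : Measure Ω) [IsProbabilityMeasure μ]
    (ℱ : Filtration ℕ m0) (n : ℕ) (X : ℕ → Ω → ℝ) (K : ℝ) (hK : 0 < K)
    (hadapted : ∀ i, StronglyMeasurable[ℱ i] (X i))
    (hmds : ∀ i ∈ Finset.Icc 1 n, μ[X i | ℱ (i - 1)] =ᵐ[μ] 0)
    (hbdd : ∀ i ∈ Finset.Icc 1 n, ∀ᵐ ω ∂μ, |X i ω| ≤ K)
    (ν t : ℝ) (hν : 0 < ν) (ht : 0 < t) :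
    μ {ω | (∃ i ∈ Finset.Icc 1 n,
              ∑ j ∈ Finset.Icc 1 i, X j ω > Real.sqrt (2 * ν * t) + (2 / 3) * K * t)
          ∧ ∑ i ∈ Finset.Icc 1 n, (μ[fun ω' => X i ω' ^ 2 | ℱ (i - 1)]) ω ≤ ν}
      ≤ ENNReal.ofReal (Real.exp (-t)) := by
  obtain ⟨l, hl, hlK, hlt⟩ := exists_le_mul_sub_bernsteinCoeff_mul hK.le hν ht
  set V : ℕ → Ω → ℝ := fun j => μ[fun ω => X j ω ^ 2 | ℱ (j - 1)]
  set M : ℕ → Ω → ℝ := fun i ω =>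
    Real.exp (l * stoppedSum X n i ω - bernsteinCoeff l K * stoppedSum V n i ω)
  have hM : Supermartingale M ℱ μ := supermartingale_exp_bernstein hadapted hmds hbdd hl hlK
  have hV_nonneg : ∀ᵐ ω ∂μ, ∀ j, 0 ≤ V j ω :=
    ae_all_iff.2 fun j => condExp_nonneg (.of_forall fun ω => sq_nonneg (X j ω))
  calc _ ≤ μ {ω | ∃ i ≤ n, Real.exp t ≤ M i ω} := by
        refine measure_mono_ae ?_
        filter_upwards [hV_nonneg] with ω hV ⟨⟨i, hi, hSi⟩, hQ⟩
        have hin := (mem_Icc.1 hi).2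
        refine ⟨i, hin, Real.exp_le_exp.2 ?_⟩
        rw [stoppedSum_of_le hin]
        have hQi := (stoppedSum_le_sum (Y := V) (fun j _ => hV j) i).trans hQ
        have := bernsteinCoeff_nonneg hlK.le
        nlinarith
    _ ≤ ENNReal.ofReal ((∫ ω, M 0 ω ∂μ) / Real.exp t) :=
        hM.measure_exists_ge_le (fun i => .of_forall fun ω => (Real.exp_pos _).le)
          (Real.exp_pos t) n
    _ = ENNReal.ofReal (Real.exp (-t)) := by simp [M, Real.exp_neg]
end
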